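/- arXiv:0711.4492 — 2 statements merged into one kernel-verified Lean document; each statement's English description precedes it below -/
import Mathlib

section
/- Let X be a topological space with a Borel measure μ, Y ⊆ X, and A ⊆ Y. Suppose Y contains a countable union of subsets Yᵢ with Aᵢ := Yᵢ ∩ A, satisfying: (a) Yᵢ = closure(Yᵢ) ∩ Y for each i; (b) μ(closure(Y) \ ⋃ᵢ closure(Yᵢ)) = 0; (c) every closure(Yᵢ) contains a set Y°ᵢ open in closure(Y) with μ(Y°ᵢ) = μ(closure Yᵢ). If every Aᵢ is generic in Yᵢ, then A is generic in Y. -/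
/-!
Cover `closure (Y \ A)` by the closures of the pieces and the null set in (b); it suffices that
each `closure (Y \ A) ∩ closure Yᵢ` is null. Up to a null set, `closure Yᵢ` is the relatively open
set `U ∩ closure Y` of (c), and on an open set `U` the closure of `Y \ A` only sees
`U ∩ Y ⊆ Yᵢ` by (a), so there it lies in `closure (Yᵢ \ A)`, which is null by genericity.
-/

open MeasureTheory Set

lemma closure_diff_inter_subset_of_isOpen {X : Type*} [TopologicalSpace X] {U Y Z A : Set X}
    (hU : IsOpen U) (hUY : U ∩ Y ⊆ Z) : closure (Y \ A) ∩ U ⊆ closure (Z \ A) := by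
  intro x hx
  refine closure_mono ?_ (hU.inter_closure ⟨hx.2, hx.1⟩)
  rintro y ⟨hyU, hyY, hyA⟩
  exact ⟨hUY ⟨hyU, hyY⟩, hyA⟩

lemma measure_null_of_inter_iUnion_null {α ι : Type*} [MeasurableSpace α] [Countable ι]
    {μ : Measure α} {C T : Set α} {S : ι → Set α} (hCT : C ⊆ T)
    (hT : μ (T \ ⋃ i, S i) = 0) (hCS : ∀ i, μ (C ∩ S i) = 0) : μ C = 0 := by
  refine measure_mono_null (fun x hx => ?_) (measure_union_null hT (measure_iUnion_null hCS))
  by_cases h : x ∈ ⋃ i, S i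
  · obtain ⟨i, hi⟩ := mem_iUnion.1 h
    exact Or.inr (mem_iUnion.2 ⟨i, hx, hi⟩)
  · exact Or.inl ⟨hCT hx, h⟩

lemma measure_closure_diff_inter_closure_eq_zero {X : Type*} [TopologicalSpace X]
    [MeasurableSpace X] [OpensMeasurableSpace X] {μ : Measure X} {Y Z A U : Set X}
    (hU : IsOpen U) (hZ : closure Z ∩ Y ⊆ Z) (hUZ : U ∩ closure Y ⊆ closure Z)
    (hμ : μ (U ∩ closure Y) = μ (closure Z)) (hfin : μ (closure Z) ≠ ⊤)
    (hgen : μ (closure (Z \ A)) = 0) : μ (closure (Y \ A) ∩ closure Z) = 0 := by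
  have hae : (U ∩ closure Y : Set X) =ᵐ[μ] closure Z :=
    ae_eq_of_subset_of_measure_ge hUZ hμ.ge
      (hU.measurableSet.inter measurableSet_closure).nullMeasurableSet (hμ ▸ hfin)
  have hUY : U ∩ Y ⊆ Z := fun y hy => hZ ⟨hUZ ⟨hy.1, subset_closure hy.2⟩, hy.2⟩
  calc μ (closure (Y \ A) ∩ closure Z) = μ (closure (Y \ A) ∩ (U ∩ closure Y)) :=
        measure_congr (ae_eq_set_inter (ae_eq_refl (closure (Y \ A))) hae.symm)
    _ = 0 := measure_mono_null
        (fun x hx => closure_diff_inter_subset_of_isOpen hU hUY ⟨hx.1, hx.2.1⟩) hgen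

theorem stmt6_general {X : Type*} [TopologicalSpace X] [MeasurableSpace X] [BorelSpace X]
    (μ : Measure X) (Y A : Set X)
    (Ys : ℕ → Set X)
    (ha : ∀ i, Ys i = closure (Ys i) ∩ Y)
    (hb : μ (closure Y \ ⋃ i, closure (Ys i)) = 0)
    (hc : ∀ i, ∃ Yo : Set X, Yo ⊆ closure (Ys i) ∧
      (∃ U : Set X, IsOpen U ∧ Yo = U ∩ closure Y) ∧ μ Yo = μ (closure (Ys i)))
    (hfin : ∀ i, μ (closure (Ys i)) < ⊤)
    (hgen : ∀ i, 0 < μ (closure (Ys i ∩ A)) ∧ μ (closure (Ys i \ (Ys i ∩ A))) = 0) :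
    0 < μ (closure A) ∧ μ (closure (Y \ A)) = 0 := by
  refine ⟨(hgen 0).1.trans_le (measure_mono (closure_mono inter_subset_right)), ?_⟩
  refine measure_null_of_inter_iUnion_null (closure_mono sdiff_subset) hb fun i => ?_
  obtain ⟨_, hUZ, ⟨U, hU, rfl⟩, hμ⟩ := hc i
  have hgen_i := (hgen i).2
  rw [sdiff_self_inter] at hgen_i
  exact measure_closure_diff_inter_closure_eq_zero hU (ha i).ge hUZ hμ (hfin i).ne hgen_i

/-- Proposition on unions of generic pieces: if `Y` contains a countable union of
subsets `Yᵢ` satisfying (a), (b), (c) and each `Aᵢ = Yᵢ ∩ A` is generic in `Yᵢ`,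
then `A` is generic in `Y`. -/
theorem stmt6 {X : Type*} [TopologicalSpace X] [MeasurableSpace X] [BorelSpace X]
    (μ : Measure X) (Y A : Set X) (hAY : A ⊆ Y)
    (Ys : ℕ → Set X) (hYs : ∀ i, Ys i ⊆ Y)
    (ha : ∀ i, Ys i = closure (Ys i) ∩ Y)
    (hb : μ (closure Y \ ⋃ i, closure (Ys i)) = 0)
    (hc : ∀ i, ∃ Yo : Set X, Yo ⊆ closure (Ys i) ∧
      (∃ U : Set X, IsOpen U ∧ Yo = U ∩ closure Y) ∧ μ Yo = μ (closure (Ys i)))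
    (hfin : ∀ i, μ (closure (Ys i)) < ⊤)
    (hgen : ∀ i, 0 < μ (closure (Ys i ∩ A)) ∧ μ (closure (Ys i \ (Ys i ∩ A))) = 0) :
    0 < μ (closure A) ∧ μ (closure (Y \ A)) = 0 :=
  stmt6_general μ Y A Ys ha hb hc hfin hgen
end

section
/- Let X be a topological space with a Borel measure μ and Y ⊆ X. Suppose A ⊆ Y is a countable union of subsets Aᵢ, and for each i there are sets Xᵢ, Zᵢ ⊆ X such that: (1) Zᵢ ⊆ closure(Aᵢ) ⊆ Xᵢ; (2) Xᵢ is closed and Zᵢ is open in X; (3) Y ⊆ ⋃ᵢ Xᵢ; (4) Zᵢ ∩ Y ⊆ Aᵢ; (5) μ(Xᵢ \ Zᵢ) = 0; (6) some Xⱼ has μ(Xⱼ) > 0; (7) μ(closure(⋃ᵢ Xᵢ) \ ⋃ᵢ Xᵢ) = 0. Then A is generic in Y. -/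
open MeasureTheory Set

/-- Genericity criterion (Proposition 4.6 of the paper). -/
theorem stmt7 {X : Type*} [TopologicalSpace X] [MeasurableSpace X] [BorelSpace X]
    (μ : Measure X) (Y A : Set X) (As Xs Zs : ℕ → Set X)
    (hA : A = ⋃ i, As i) (hAY : A ⊆ Y)
    (h1 : ∀ i, Zs i ⊆ closure (As i) ∧ closure (As i) ⊆ Xs i)
    (h2 : ∀ i, IsClosed (Xs i) ∧ IsOpen (Zs i))
    (h3 : Y ⊆ ⋃ i, Xs i)
    (h4 : ∀ i, Zs i ∩ Y ⊆ As i)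
    (h5 : ∀ i, μ (Xs i \ Zs i) = 0)
    (h6 : ∃ j, 0 < μ (Xs j))
    (h7 : μ (closure (⋃ i, Xs i) \ ⋃ i, Xs i) = 0) :
    0 < μ (closure A) ∧ μ (closure (Y \ A)) = 0 := by
  constructor
  · obtain ⟨j, hj⟩ := h6
    have hle : μ (Xs j) ≤ μ (Zs j) := by
      calc μ (Xs j) ≤ μ (Xs j ∩ Zs j) + μ (Xs j \ Zs j) := measure_le_inter_add_diff μ _ _
        _ = μ (Xs j ∩ Zs j) := by rw [h5 j, add_zero]
        _ ≤ μ (Zs j) := measure_mono inter_subset_right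
    have hZA : Zs j ⊆ closure A := by
      refine (h1 j).1.trans (closure_mono ?_)
      rw [hA]; exact subset_iUnion As j
    exact lt_of_lt_of_le (lt_of_lt_of_le hj hle) (measure_mono hZA)
  · have hsub : closure (Y \ A) ⊆
        (closure (⋃ i, Xs i) \ ⋃ i, Xs i) ∪ ⋃ i, (Xs i \ Zs i) := by
      intro x hx
      have hxc : x ∈ closure (⋃ i, Xs i) :=
        closure_mono (fun y hy => h3 hy.1) hx
      by_cases hx2 : x ∈ ⋃ i, Xs i
      · right
        obtain ⟨i, hxi⟩ := mem_iUnion.1 hx2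
        have hnotZ : ∀ k, x ∉ Zs k := by
          intro k hxk
          obtain ⟨y, hyZ, hyYA⟩ := mem_closure_iff.1 hx (Zs k) (h2 k).2 hxk
          exact hyYA.2 (hA ▸ mem_iUnion.2 ⟨k, h4 k ⟨hyZ, hyYA.1⟩⟩)
        exact mem_iUnion.2 ⟨i, hxi, hnotZ i⟩
      · exact Or.inl ⟨hxc, hx2⟩
    have : μ ((closure (⋃ i, Xs i) \ ⋃ i, Xs i) ∪ ⋃ i, (Xs i \ Zs i)) = 0 :=
      measure_union_null h7 (measure_iUnion_null h5)
    exact measure_mono_null hsub this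
end
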